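/- arXiv:2203.15410 — 2 statements merged into one kernel-verified Lean document; each statement's English description precedes it below -/
import Mathlib

section
/- Suppose the sequence (τ^k) is defined by τ^{k+1} = max{ωτ^k, min{τ^k, d^k}} with ω ∈ (0,1), τ^0 > 0, d^k ≥ 0. If there exists τ̄ > 0 with τ^k ≥ τ̄ for all k, but d^k < τ̄ for all sufficiently large k, then a contradiction follows; hence no such τ̄ exists (i.e., τ^k → 0 whenever d^k is eventually below every positive threshold). -/
/-- No positive lower bound τ̄ on (τ^k) can coexist with d^k eventually
below τ̄: assuming τ^k ≥ τ̄ > 0 for all k and d^k < τ̄ for all large k yields False. -/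
theorem no_positive_lower_bound (ω : ℝ) (hω : ω ∈ Set.Ioo (0 : ℝ) 1)
    (τ : ℕ → ℝ) (hτ0 : 0 < τ 0)
    (d : ℕ → ℝ) (hd : ∀ k, 0 ≤ d k)
    (hrec : ∀ k, τ (k + 1) = max (ω * τ k) (min (τ k) (d k)))
    (τbar : ℝ) (hτbar : 0 < τbar)
    (hlb : ∀ k, τbar ≤ τ k)
    (hsmall : ∃ K : ℕ, ∀ k ≥ K, d k < τbar) :
    False := by
  obtain ⟨hω0, hω1⟩ := hω
  obtain ⟨K, hK⟩ := hsmall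
  -- For k ≥ K, τ (k+1) = ω * τ k
  have hstep : ∀ k ≥ K, τ (k + 1) ≤ ω * τ k := by
    intro k hk
    have hdk : d k < τbar := hK k hk
    have hmin : min (τ k) (d k) = d k :=
      min_eq_right (le_trans (le_of_lt hdk) (hlb k))
    rw [hrec k, hmin]
    rcases le_or_gt (d k) (ω * τ k) with h | h
    · simp [max_eq_left h]
    · exfalso
      have h1 : τbar ≤ max (ω * τ k) (d k) := by
        have := hlb (k + 1); rwa [hrec k, hmin] at this
      have h2 : max (ω * τ k) (d k) = d k := max_eq_right h.le
      rw [h2] at h1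
      exact absurd h1 (not_le.mpr hdk)
  have hgeo : ∀ n : ℕ, τ (K + n) ≤ ω ^ n * τ K := by
    intro n
    induction n with
    | zero => simp
    | succ n ih =>
      have h1 := hstep (K + n) (Nat.le_add_right K n)
      calc τ (K + (n + 1)) = τ (K + n + 1) := by ring_nf
        _ ≤ ω * τ (K + n) := h1
        _ ≤ ω * (ω ^ n * τ K) := by
            exact mul_le_mul_of_nonneg_left ih hω0.le
        _ = ω ^ (n + 1) * τ K := by ring
  have hτK : 0 < τ K := lt_of_lt_of_le hτbar (hlb K)
  obtain ⟨n, hn⟩ := exists_pow_lt_of_lt_one (div_pos hτbar hτK) hω1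
  have : τ (K + n) < τbar := by
    calc τ (K + n) ≤ ω ^ n * τ K := hgeo n
      _ < (τbar / τ K) * τ K := by
          exact mul_lt_mul_of_pos_right hn hτK
      _ = τbar := div_mul_cancel₀ _ hτK.ne'
  exact absurd (hlb (K + n)) (not_le.mpr this)
end

section
/- Consider the Cournot game where each firm i minimizes J_i(x_i, x_{-i}) = (m_i − p_i)ᵀx_i + (Σ_j C_{i,j} x_j)ᵀ x_i with C_{j,i} = C_{i,j}ᵀ for all i < j. Then P(x) = Σ_i ( (m_i − p_i)ᵀ x_i + x_iᵀ C_{i,i} x_i + Σ_{j < i} x_jᵀ C_{j,i} x_i ) is an exact potential function for this game: for all i, x_{-i}, x_i, y_i, P(x_i, x_{-i}) − P(y_i, x_{-i}) = J_i(x_i, x_{-i}) − J_i(y_i, x_{-i}). -/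
open Matrix

lemma sum_dot' {N n : ℕ} (s : Finset (Fin N)) (v : Fin N → Fin n → ℝ) (w : Fin n → ℝ) :
    (∑ j ∈ s, v j) ⬝ᵥ w = ∑ j ∈ s, v j ⬝ᵥ w := by
  simp only [dotProduct, Finset.sum_apply, Finset.sum_mul]
  rw [Finset.sum_comm]

lemma dot_trans' {n : ℕ} (A : Matrix (Fin n) (Fin n) ℝ) (u v : Fin n → ℝ) :
    u ⬝ᵥ (Aᵀ *ᵥ v) = (A *ᵥ u) ⬝ᵥ v := by
  rw [dotProduct_mulVec, vecMul_transpose]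

/-- The Cournot game with symmetric cross-interaction matrices admits
the stated exact potential function. -/
theorem cournot_exact_potential {N n : ℕ}
    (m p : Fin N → Fin n → ℝ)
    (C : Fin N → Fin N → Matrix (Fin n) (Fin n) ℝ)
    (hC : ∀ i j : Fin N, i < j → C j i = (C i j)ᵀ)
    (J : Fin N → (Fin N → Fin n → ℝ) → ℝ)
    (hJ : ∀ i x, J i x = (m i - p i) ⬝ᵥ x i + (∑ j, C i j *ᵥ x j) ⬝ᵥ x i)
    (P : (Fin N → Fin n → ℝ) → ℝ)
    (hP : ∀ x, P x = ∑ i, ((m i - p i) ⬝ᵥ x i + x i ⬝ᵥ (C i i *ᵥ x i)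
      + ∑ j ∈ Finset.univ.filter (· < i), x j ⬝ᵥ (C j i *ᵥ x i))) :
    ∀ i : Fin N, ∀ x : Fin N → Fin n → ℝ, ∀ yi : Fin n → ℝ,
      P x - P (Function.update x i yi) = J i x - J i (Function.update x i yi) := by
  intro i x yi
  set y := Function.update x i yi with hy
  have hyk : ∀ k, k ≠ i → y k = x k := fun k hk => Function.update_of_ne hk _ _
  have hyi : y i = yi := Function.update_self _ _ _
  set a := m i - p i with ha
  set g : Fin N → ℝ := fun j => (C i j *ᵥ x j) ⬝ᵥ x i - (C i j *ᵥ x j) ⬝ᵥ yi with hg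
  set Fx : Fin N → ℝ := fun k => (m k - p k) ⬝ᵥ x k + x k ⬝ᵥ (C k k *ᵥ x k)
      + ∑ j ∈ Finset.univ.filter (· < k), x j ⬝ᵥ (C j k *ᵥ x k) with hFx
  set Fy : Fin N → ℝ := fun k => (m k - p k) ⬝ᵥ y k + y k ⬝ᵥ (C k k *ᵥ y k)
      + ∑ j ∈ Finset.univ.filter (· < k), y j ⬝ᵥ (C j k *ᵥ y k) with hFy
  have hL : P x - P y = ∑ k, (Fx k - Fy k) := by
    rw [hP, hP, ← Finset.sum_sub_distrib]
  rw [hL, ← Finset.add_sum_erase _ _ (Finset.mem_univ i)]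
  -- the k = i part
  have hIi : Fx i - Fy i = a ⬝ᵥ x i - a ⬝ᵥ yi
      + (x i ⬝ᵥ (C i i *ᵥ x i) - yi ⬝ᵥ (C i i *ᵥ yi))
      + ∑ j ∈ Finset.univ.filter (· < i), g j := by
    have h1 : ∀ j ∈ Finset.univ.filter (· < i),
        x j ⬝ᵥ (C j i *ᵥ x i) - y j ⬝ᵥ (C j i *ᵥ yi) = g j := by
      intro j hj
      rw [Finset.mem_filter] at hj
      have hji : j < i := hj.2
      have hCji : C j i = (C i j)ᵀ := by rw [hC j i hji, transpose_transpose]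
      rw [hyk j (ne_of_lt hji), hCji, dot_trans', dot_trans']
    rw [hFx, hFy]
    simp only [hyi]
    rw [show ∀ A B S A' B' T : ℝ, A + B + S - (A' + B' + T) = (A - A') + (B - B') + (S - T)
      from by intros; ring]
    rw [← Finset.sum_sub_distrib, Finset.sum_congr rfl h1]
  -- the k ≠ i part
  have hrest : ∀ k ∈ Finset.univ.erase i,
      Fx k - Fy k = if i < k then g k else 0 := by
    intro k hk
    have hki : k ≠ i := Finset.ne_of_mem_erase hk
    rw [hFx, hFy]
    simp only [hyk k hki]
    have h2 : ∀ j ∈ Finset.univ.filter (· < k),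
        x j ⬝ᵥ (C j k *ᵥ x k) - y j ⬝ᵥ (C j k *ᵥ x k)
        = if j = i then (x i - yi) ⬝ᵥ (C j k *ᵥ x k) else 0 := by
      intro j _
      by_cases hji : j = i
      · subst hji; rw [hyi, sub_dotProduct, if_pos rfl]
      · rw [hyk j hji, sub_self, if_neg hji]
    have hsum : ∑ j ∈ Finset.univ.filter (· < k), x j ⬝ᵥ (C j k *ᵥ x k)
        - ∑ j ∈ Finset.univ.filter (· < k), y j ⬝ᵥ (C j k *ᵥ x k)
        = if i < k then (x i - yi) ⬝ᵥ (C i k *ᵥ x k) else 0 := by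
      rw [← Finset.sum_sub_distrib, Finset.sum_congr rfl h2, Finset.sum_ite_eq']
      simp [Finset.mem_filter]
    rw [show ∀ A B S T : ℝ, A + B + S - (A + B + T) = S - T from by intros; ring]
    rw [hsum]
    by_cases hik : i < k
    · rw [if_pos hik, if_pos hik, sub_dotProduct, hg]
      simp only
      rw [dotProduct_comm, dotProduct_comm yi]
    · rw [if_neg hik, if_neg hik]
  rw [Finset.sum_congr rfl hrest, Finset.sum_erase _ (by simp),
    ← Finset.sum_filter, hIi]
  -- the RHS
  have hR : J i x - J i y = a ⬝ᵥ x i - a ⬝ᵥ yi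
      + ((C i i *ᵥ x i) ⬝ᵥ x i - (C i i *ᵥ yi) ⬝ᵥ yi)
      + ∑ j ∈ Finset.univ.erase i, g j := by
    rw [hJ, hJ, hyi, sum_dot', sum_dot',
      ← Finset.add_sum_erase _ _ (Finset.mem_univ i),
      ← Finset.add_sum_erase _ _ (Finset.mem_univ i), hyi]
    have h3 : ∀ j ∈ Finset.univ.erase i, (C i j *ᵥ y j) ⬝ᵥ yi = (C i j *ᵥ x j) ⬝ᵥ yi := by
      intro j hj
      rw [hyk j (Finset.ne_of_mem_erase hj)]
    rw [Finset.sum_congr rfl h3, hg]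
    rw [show ∀ A B S A' B' T : ℝ, A + (B + S) - (A' + (B' + T)) = (A - A') + (B - B') + (S - T)
      from by intros; ring]
    rw [← Finset.sum_sub_distrib]
  rw [hR]
  have hunion : ∑ j ∈ Finset.univ.erase i, g j
      = ∑ j ∈ Finset.univ.filter (· < i), g j + ∑ j ∈ Finset.univ.filter (i < ·), g j := by
    rw [← Finset.sum_union]
    · congr 1
      ext k
      simp only [Finset.mem_union, Finset.mem_filter, Finset.mem_erase, Finset.mem_univ,
        true_and, and_true, ne_eq]
      omega
    · rw [Finset.disjoint_filter]
      intro k _ h1 h2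
      exact absurd (h1.trans h2) (lt_irrefl k)
  rw [hunion, dotProduct_comm (x i), dotProduct_comm yi]
  ring
end
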